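/- The map T : c₀^λ(F̂) → c₀ defined by T(x) = F̄(x) is a linear bijection that preserves the norm ‖x‖ = sup_n |F̄_n(x)|; in particular c₀^λ(F̂) is linearly isometric to c₀. -/

import Mathlib

open Filter Finset

noncomputable def fibR : ℕ → ℝ
  | 0 => 1
  | 1 => 1
  | (n + 2) => fibR (n + 1) + fibR n

noncomputable def Fhat (x : ℕ → ℝ) (n : ℕ) : ℝ :=
  fibR n / fibR (n + 1) * x n - fibR (n + 1) / fibR n * (if n = 0 then 0 else x (n - 1))

noncomputable def Fbar (Λ : ℕ → ℝ) (x : ℕ → ℝ) (n : ℕ) : ℝ :=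
  (1 / Λ n) * ∑ k ∈ Finset.range (n + 1),
    (Λ k - if k = 0 then 0 else Λ (k - 1)) *
      (fibR k / fibR (k + 1) * x k -
        fibR (k + 1) / fibR k * (if k = 0 then 0 else x (k - 1)))

/-!
`F̄ x` is obtained from `x` by four maps that are each bijective on all real sequences:
`F̂`, which is lower bidiagonal with nonzero diagonal `f_n / f_{n+1}` and hence invertible
by forward substitution; multiplication by the positive weights `λ_k - λ_{k-1}`; partial
summation, inverted by backward differences; and multiplication by `1 / λ_n`. So `F̄` is a
linear bijection of all sequences, and it restricts to a bijection of `c₀^λ(F̂)` onto `c₀`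
since `c₀^λ(F̂)` is the preimage of `c₀`. The norm of `c₀^λ(F̂)` is defined through `F̄`,
so the isometry is automatic.
-/

lemma fibR_pos : ∀ n, 0 < fibR n
  | 0 => one_pos
  | 1 => one_pos
  | (n + 2) => by rw [fibR]; exact add_pos (fibR_pos (n + 1)) (fibR_pos n)

/-- Backward difference, with `h (-1) = 0`. -/
def bdiff {M : Type*} [AddCommGroup M] (h : ℕ → M) (k : ℕ) : M :=
  h k - if k = 0 then 0 else h (k - 1)

section bdiff

variable {M : Type*} [AddCommGroup M]

lemma sum_range_bdiff (h : ℕ → M) (n : ℕ) : ∑ k ∈ range (n + 1), bdiff h k = h n := by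
  induction n with
  | zero => simp [bdiff]
  | succ m ih => rw [sum_range_succ, ih]; simp [bdiff]

lemma bdiff_sum_range (f : ℕ → M) (n : ℕ) :
    bdiff (fun m => ∑ k ∈ range (m + 1), f k) n = f n := by
  cases n with
  | zero => simp [bdiff]
  | succ m => simp [bdiff, sum_range_succ]

end bdiff

lemma bdiff_pos_of_strictMono {Λ : ℕ → ℝ} (hmono : StrictMono Λ) (hpos : 0 < Λ 0) (k : ℕ) :
    0 < bdiff Λ k := by
  cases k with
  | zero => simpa [bdiff] using hpos
  | succ n => simpa [bdiff] using hmono n.lt_succ_self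

lemma Fbar_eq (Λ x : ℕ → ℝ) (n : ℕ) :
    Fbar Λ x n = (Λ n)⁻¹ * ∑ k ∈ range (n + 1), bdiff Λ k * Fhat x k := by
  rw [Fbar, one_div]; rfl

lemma Fhat_add (x y : ℕ → ℝ) (n : ℕ) :
    Fhat (fun k => x k + y k) n = Fhat x n + Fhat y n := by
  simp only [Fhat]; split_ifs <;> ring

lemma Fhat_const_mul (c : ℝ) (x : ℕ → ℝ) (n : ℕ) :
    Fhat (fun k => c * x k) n = c * Fhat x n := by
  simp only [Fhat]; split_ifs <;> ring

lemma Fbar_add (Λ x y : ℕ → ℝ) :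
    Fbar Λ (fun n => x n + y n) = fun n => Fbar Λ x n + Fbar Λ y n := by
  funext n
  simp only [Fbar_eq, Fhat_add, mul_add, sum_add_distrib]

lemma Fbar_const_mul (Λ : ℕ → ℝ) (c : ℝ) (x : ℕ → ℝ) :
    Fbar Λ (fun n => c * x n) = fun n => c * Fbar Λ x n := by
  funext n
  simp only [Fbar_eq, Fhat_const_mul, mul_left_comm _ c, ← mul_sum]

lemma Fhat_injective : Function.Injective Fhat := by
  intro x y h
  funext n
  induction n with
  | zero => simpa [Fhat, fibR] using congrFun h 0
  | succ m ih =>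
    have hm := congrFun h (m + 1)
    simp only [Fhat, Nat.succ_ne_zero, if_false, Nat.add_sub_cancel, ih] at hm
    exact mul_left_cancel₀ (div_pos (fibR_pos _) (fibR_pos _)).ne' (sub_left_inj.mp hm)

/-- Forward substitution solving `Fhat x = g`. -/
noncomputable def fhatInv (g : ℕ → ℝ) : ℕ → ℝ
  | 0 => g 0
  | n + 1 => fibR (n + 2) / fibR (n + 1) * (g (n + 1) + fibR (n + 2) / fibR (n + 1) * fhatInv g n)

lemma Fhat_fhatInv (g : ℕ → ℝ) (n : ℕ) : Fhat (fhatInv g) n = g n := by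
  cases n with
  | zero => simp [Fhat, fhatInv, fibR]
  | succ m =>
    have h1 := (fibR_pos (m + 1)).ne'
    have h2 := (fibR_pos (m + 2)).ne'
    simp only [Fhat, fhatInv, Nat.succ_ne_zero, if_false, Nat.add_sub_cancel]
    field_simp
    ring

lemma Fhat_surjective : Function.Surjective Fhat :=
  fun g => ⟨fhatInv g, funext (Fhat_fhatInv g)⟩

section Fbar

variable {Λ : ℕ → ℝ} (hmono : StrictMono Λ) (hpos : ∀ k, 0 < Λ k)
include hmono hpos

lemma Fbar_injective : Function.Injective (Fbar Λ) := by
  intro x y h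
  have hsum : (fun n => ∑ k ∈ range (n + 1), bdiff Λ k * Fhat x k) =
      fun n => ∑ k ∈ range (n + 1), bdiff Λ k * Fhat y k := by
    funext n
    have hn := congrFun h n
    rw [Fbar_eq, Fbar_eq] at hn
    exact mul_left_cancel₀ (inv_ne_zero (hpos n).ne') hn
  apply Fhat_injective
  funext k
  have hk := congrArg (bdiff · k) hsum
  simp only [bdiff_sum_range] at hk
  exact mul_left_cancel₀ (bdiff_pos_of_strictMono hmono (hpos 0) k).ne' hk

lemma Fbar_surjective : Function.Surjective (Fbar Λ) := by
  intro y
  obtain ⟨x, hx⟩ := Fhat_surjective fun k => bdiff (fun m => Λ m * y m) k / bdiff Λ k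
  refine ⟨x, funext fun n => ?_⟩
  have hterm : ∀ k, bdiff Λ k * Fhat x k = bdiff (fun m => Λ m * y m) k := fun k => by
    rw [hx]; exact mul_div_cancel₀ _ (bdiff_pos_of_strictMono hmono (hpos 0) k).ne'
  rw [Fbar_eq, sum_congr rfl fun k _ => hterm k, sum_range_bdiff,
    inv_mul_cancel_left₀ (hpos n).ne']

end Fbar

theorem c0lambdaF_isometric_c0_general (Λ : ℕ → ℝ) (hmono : StrictMono Λ) (hpos : ∀ k, 0 < Λ k) :
    (∀ x y : ℕ → ℝ, Fbar Λ (fun n => x n + y n) = fun n => Fbar Λ x n + Fbar Λ y n) ∧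
    (∀ (c : ℝ) (x : ℕ → ℝ), Fbar Λ (fun n => c * x n) = fun n => c * Fbar Λ x n) ∧
    (∀ x y : ℕ → ℝ, Tendsto (Fbar Λ x) atTop (nhds 0) →
      Tendsto (Fbar Λ y) atTop (nhds 0) → Fbar Λ x = Fbar Λ y → x = y) ∧
    (∀ y : ℕ → ℝ, Tendsto y atTop (nhds 0) →
      ∃ x : ℕ → ℝ, Tendsto (Fbar Λ x) atTop (nhds 0) ∧ Fbar Λ x = y) ∧
    (∀ x : ℕ → ℝ, Tendsto (Fbar Λ x) atTop (nhds 0) →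
      (⨆ n, |Fbar Λ x n|) = ⨆ n, |(Fbar Λ x) n|) := by
  refine ⟨Fbar_add Λ, Fbar_const_mul Λ, fun x y _ _ h => Fbar_injective hmono hpos h,
    fun y hy => ?_, fun _ _ => rfl⟩
  obtain ⟨x, hx⟩ := Fbar_surjective hmono hpos y
  exact ⟨x, hx ▸ hy, hx⟩

theorem c0lambdaF_isometric_c0 (Λ : ℕ → ℝ) (hmono : StrictMono Λ) (hpos : ∀ k, 0 < Λ k)
    (hlim : Tendsto Λ atTop atTop) :
    (∀ x y : ℕ → ℝ, Fbar Λ (fun n => x n + y n) = fun n => Fbar Λ x n + Fbar Λ y n) ∧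
    (∀ (c : ℝ) (x : ℕ → ℝ), Fbar Λ (fun n => c * x n) = fun n => c * Fbar Λ x n) ∧
    (∀ x y : ℕ → ℝ, Tendsto (Fbar Λ x) atTop (nhds 0) →
      Tendsto (Fbar Λ y) atTop (nhds 0) → Fbar Λ x = Fbar Λ y → x = y) ∧
    (∀ y : ℕ → ℝ, Tendsto y atTop (nhds 0) →
      ∃ x : ℕ → ℝ, Tendsto (Fbar Λ x) atTop (nhds 0) ∧ Fbar Λ x = y) ∧
    (∀ x : ℕ → ℝ, Tendsto (Fbar Λ x) atTop (nhds 0) →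
      (⨆ n, |Fbar Λ x n|) = ⨆ n, |(Fbar Λ x) n|) :=
  c0lambdaF_isometric_c0_general Λ hmono hpos
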